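/- For a = 0 and b ∉ {0,1}, the Witt algebra module 𝒜_{0,b} with action d_m v_i = (i + bm)v_{m+i} is irreducible. -/

import Mathlib

/-!
`d₀` acts diagonally on the basis `vₖ` with pairwise distinct eigenvalues `a + k`, so an invariant
subspace containing `u ≠ 0` contains each basis vector in the support of `u`: applying
`d₀ - (a + j)` removes the `v_j`-component and keeps the others. Once `vᵢ ∈ U`, the vector
`d_m vᵢ = (a + i + b m) v_{i+m}` puts `v_{i+m}` in `U` unless that coefficient vanishes. If it
vanishes for `m = j - i`, go through `v_{i+ε}` with `ε ≠ 0` and `a + i + b ε ≠ 0` (which exists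
as `b ≠ 0`): the coefficient of the second hop is then `ε (1 - b) ≠ 0`.
-/

/-- The action of the Witt-algebra generator `d_m` on the module
`𝒜_{a,b} = ⊕_{i∈ℤ} ℂ vᵢ` (encoded as `ℤ →₀ ℂ`, with `vᵢ = single i 1`):
`d_m · vᵢ = (a + i + b m) v_{m+i}`, extended linearly. -/
noncomputable def dAct (a b : ℂ) (m : ℤ) (v : ℤ →₀ ℂ) : ℤ →₀ ℂ :=
  v.sum fun i c => Finsupp.single (m + i) ((a + (i : ℂ) + b * (m : ℂ)) * c)

theorem Submodule.single_one_mem_of_single_mem {K ι : Type*} [Field K]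
    {U : Submodule K (ι →₀ K)} {i : ι} {c : K} (hc : c ≠ 0) (h : Finsupp.single i c ∈ U) :
    Finsupp.single i 1 ∈ U := by
  simpa [Finsupp.smul_single, hc] using U.smul_mem c⁻¹ h

theorem Submodule.eq_top_of_forall_single_one_mem {K ι : Type*} [Field K]
    {U : Submodule K (ι →₀ K)} (h : ∀ i, Finsupp.single i 1 ∈ U) : U = ⊤ := by
  rw [eq_top_iff, ← (Finsupp.basisSingleOne (R := K) (ι := ι)).span_eq, Submodule.span_le]
  rintro _ ⟨i, rfl⟩
  simpa using h i

theorem Submodule.single_one_mem_of_mem_support_of_diagonal {K ι : Type*} [Field K]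
    {U : Submodule K (ι →₀ K)} (D : (ι →₀ K) → ι →₀ K) (μ : ι → K)
    (hμ : Function.Injective μ) (hD : ∀ v k, D v k = μ k * v k) (hU : ∀ v ∈ U, D v ∈ U)
    {u : ι →₀ K} (hu : u ∈ U) {i : ι} (hi : i ∈ u.support) : Finsupp.single i 1 ∈ U := by
  classical
  induction hn : u.support.card using Nat.strong_induction_on generalizing u with
  | _ n ih =>
  by_cases hsupp : u.support = {i}
  · rw [Finsupp.support_subset_singleton.1 hsupp.subset] at hu
    exact single_one_mem_of_single_mem (Finsupp.mem_support_iff.1 hi) hu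
  obtain ⟨j, hj, hji⟩ : ∃ j ∈ u.support, j ≠ i := by
    by_contra! h
    exact hsupp (Finset.eq_singleton_iff_unique_mem.2 ⟨hi, h⟩)
  set w := D u - μ j • u
  have hw : ∀ k, w k = (μ k - μ j) * u k := fun k => by simp [w, hD, sub_mul]
  have hw_supp : w.support ⊆ u.support.erase j := fun k hk => by
    rw [Finsupp.mem_support_iff, hw] at hk
    exact Finset.mem_erase.2 ⟨fun hkj => by simp [hkj] at hk,
      Finsupp.mem_support_iff.2 (right_ne_zero_of_mul hk)⟩
  have hi_w : i ∈ w.support := by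
    rw [Finsupp.mem_support_iff, hw]
    exact mul_ne_zero (sub_ne_zero.2 (hμ.ne hji.symm)) (Finsupp.mem_support_iff.1 hi)
  refine ih _ ?_ (u := w) (U.sub_mem (hU u hu) (U.smul_mem _ hu)) hi_w rfl
  calc w.support.card ≤ (u.support.erase j).card := Finset.card_le_card hw_supp
    _ < n := hn ▸ Finset.card_erase_lt_of_mem hj

theorem dAct_single (a b : ℂ) (m i : ℤ) (c : ℂ) :
    dAct a b m (Finsupp.single i c) = Finsupp.single (m + i) ((a + i + b * m) * c) := by
  simp [dAct]

theorem dAct_zero_apply (a b : ℂ) (v : ℤ →₀ ℂ) (k : ℤ) :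
    dAct a b 0 v k = (a + k) * v k := by
  simp only [dAct, Finsupp.sum_apply, Finsupp.single_apply, zero_add, Int.cast_zero, mul_zero,
    add_zero]
  rw [Finsupp.sum_ite_eq']
  split_ifs <;> simp_all

section

variable {a b : ℂ} {U : Submodule ℂ (ℤ →₀ ℂ)} (hU : ∀ m : ℤ, ∀ v ∈ U, dAct a b m v ∈ U)
include hU

theorem exists_single_one_mem_of_dAct_invariant (hU_ne : U ≠ ⊥) :
    ∃ i, Finsupp.single i 1 ∈ U := by
  obtain ⟨u, hu, hu_ne⟩ := Submodule.exists_mem_ne_zero_of_ne_bot hU_ne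
  obtain ⟨i, hi⟩ := Finsupp.support_nonempty_iff.2 hu_ne
  exact ⟨i, U.single_one_mem_of_mem_support_of_diagonal (dAct a b 0) (fun k => a + k)
    ((add_right_injective a).comp Int.cast_injective) (dAct_zero_apply a b) (hU 0) hu hi⟩

theorem single_one_add_mem_of_dAct_invariant {i : ℤ} (hi : Finsupp.single i 1 ∈ U) {m : ℤ}
    (hm : a + i + b * m ≠ 0) : Finsupp.single (m + i) 1 ∈ U := by
  have h := hU m _ hi
  rw [dAct_single, mul_one] at h
  exact U.single_one_mem_of_single_mem hm h

theorem single_one_mem_of_dAct_invariant (hb0 : b ≠ 0) (hb1 : b ≠ 1) {i : ℤ}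
    (hi : Finsupp.single i 1 ∈ U) (j : ℤ) : Finsupp.single j 1 ∈ U := by
  rcases ne_or_eq (a + i + b * (j - i : ℤ)) 0 with hdirect | hdirect
  · simpa using single_one_add_mem_of_dAct_invariant hU hi hdirect
  obtain ⟨ε, hε0, hε⟩ : ∃ ε : ℤ, ε ≠ 0 ∧ a + i + b * ε ≠ 0 := by
    by_cases h1 : a + i + b * (1 : ℤ) = 0
    · refine ⟨-1, by norm_num, fun h2 => hb0 ?_⟩
      push_cast at h1 h2
      linear_combination (h1 - h2) / 2
    · exact ⟨1, one_ne_zero, h1⟩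
  have hcoef : a + (ε + i : ℤ) + b * (j - (ε + i) : ℤ) = ε * (1 - b) := by
    push_cast at hdirect ⊢
    linear_combination hdirect
  simpa using single_one_add_mem_of_dAct_invariant hU
    (single_one_add_mem_of_dAct_invariant hU hi hε) (m := j - (ε + i))
    (hcoef ▸ mul_ne_zero (Int.cast_ne_zero.2 hε0) (sub_ne_zero.2 hb1.symm))

theorem eq_bot_or_eq_top_of_dAct_invariant (hb0 : b ≠ 0) (hb1 : b ≠ 1) : U = ⊥ ∨ U = ⊤ := by
  refine or_iff_not_imp_left.2 fun hU_ne => ?_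
  obtain ⟨i, hi⟩ := exists_single_one_mem_of_dAct_invariant hU hU_ne
  exact Submodule.eq_top_of_forall_single_one_mem
    (single_one_mem_of_dAct_invariant hU hb0 hb1 hi)

end

/-- for `a = 0` and `b ∉ {0,1}`, the Witt module `𝒜_{0,b}` (with action
`d_m vᵢ = (i + bm) v_{m+i}`) is irreducible. -/
theorem A0b_irreducible (b : ℂ) (hb0 : b ≠ 0) (hb1 : b ≠ 1) :
    ∀ U : Submodule ℂ (ℤ →₀ ℂ),
      (∀ m : ℤ, ∀ v ∈ U, dAct 0 b m v ∈ U) → U = ⊥ ∨ U = ⊤ :=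
  fun _ hU => eq_bot_or_eq_top_of_dAct_invariant hU hb0 hb1
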